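/- Let Ω ⊂ ℝ^d be a bounded domain, let f : Ω → ℝ be Lipschitz with constant L, i.e. |f(x) − f(y)| ≤ L|x − y| for all x, y, and let g ∈ L^q(Ω), 1 ≤ q ≤ ∞. Let η_ε be a standard mollifier at scale ε and write v^ε = v * η_ε. Then there is a constant C > 0 independent of ε, f and g such that ‖(fg)^ε − f g^ε‖_{L^q} ≤ C ε L ‖g‖_{L^q(Ω)}; in particular, when q < ∞, (fg)^ε − f g^ε → 0 in L^q as ε → 0. -/

import Mathlib

open MeasureTheory Metric Set Filter
open scoped ENNReal Topology

noncomputable section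

abbrev Euc (d : ℕ) := EuclideanSpace ℝ (Fin d)

/-- `i`-th standard basis vector of `ℝ^d`. -/
def e (d : ℕ) (i : Fin d) : Euc d := EuclideanSpace.single i 1

/-- A standard mollifier: smooth, nonnegative, unit mass, supported in the unit ball. -/
def IsStdMollifier {d : ℕ} (η : Euc d → ℝ) : Prop :=
  ContDiff ℝ (⊤ : ℕ∞) η ∧ (∀ x, 0 ≤ η x) ∧ (∫ x, η x) = 1 ∧ tsupport η ⊆ closedBall 0 1

/-- The rescaled mollifier `η_ε(x) = ε^{-d} η(x/ε)`. -/
def mollScaled {d : ℕ} (η : Euc d → ℝ) (ε : ℝ) (x : Euc d) : ℝ :=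
  (ε ^ d)⁻¹ * η (ε⁻¹ • x)

/-- Mollification `f * η_ε`. -/
def moll {d : ℕ} {F : Type*} [NormedAddCommGroup F] [NormedSpace ℝ F]
    (η : Euc d → ℝ) (ε : ℝ) (f : Euc d → F) (x : Euc d) : F :=
  ∫ y, mollScaled η ε (x - y) • f y

/-! For `x` farther than `ε` from `∂Ω`, the commutator equals `∫ η_ε(x - y) (f y - f x) g y dy`,
and `|f y - f x| ≤ L ε` on the support of `η_ε(x - ·)`, so it is bounded pointwise by
`L ε (|g| 1_Ω ⋆ η_ε)(x)`. As `η_ε` is a probability density, convolving with it does not increase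
`L^q` norms (Jensen's inequality for the measure `η_ε(x - y) dy`, then Tonelli); hence `C = 1`. -/

theorem rpow_lintegral_le_lintegral_rpow {α : Type*} [MeasurableSpace α] {ν : Measure α}
    [IsProbabilityMeasure ν] {H : α → ℝ≥0∞} (hH : AEMeasurable H ν) {p : ℝ} (hp : 1 ≤ p) :
    (∫⁻ a, H a ∂ν) ^ p ≤ ∫⁻ a, H a ^ p ∂ν := by
  have hp0 : 0 < p := zero_lt_one.trans_le hp
  have h := eLpNorm_le_eLpNorm_of_exponent_le (μ := ν) (ENNReal.one_le_ofReal.2 hp)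
    hH.aestronglyMeasurable
  rw [eLpNorm_one_eq_lintegral_enorm, eLpNorm_eq_lintegral_rpow_enorm_toReal (by positivity)
    ENNReal.ofReal_ne_top, ENNReal.toReal_ofReal hp0.le] at h
  simp only [enorm_eq_self] at h
  calc (∫⁻ a, H a ∂ν) ^ p ≤ ((∫⁻ a, H a ^ p ∂ν) ^ (1 / p)) ^ p := ENNReal.rpow_le_rpow h hp0.le
    _ = ∫⁻ a, H a ^ p ∂ν := by
      rw [← ENNReal.rpow_mul, one_div_mul_cancel hp0.ne', ENNReal.rpow_one]

section Young

variable {G : Type*} [MeasurableSpace G] [AddGroup G] [MeasurableAdd₂ G] [MeasurableNeg G]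
  {μ : Measure G} [μ.IsAddLeftInvariant] [μ.IsNegInvariant] {H k : G → ℝ≥0∞}

theorem lintegral_neg_add_eq_self (k : G → ℝ≥0∞) (x : G) :
    ∫⁻ y, k (-y + x) ∂μ = ∫⁻ y, k y ∂μ := by
  rw [← lintegral_add_left_eq_self _ x]
  simp only [neg_add_rev, neg_add_cancel_right]
  exact lintegral_neg_eq_self k

theorem lconvolution_le_essSup (hk : Measurable k) (hk1 : ∫⁻ z, k z ∂μ = 1) (x : G) :
    (H ⋆ₗ[μ] k) x ≤ essSup H μ :=
  calc (H ⋆ₗ[μ] k) x ≤ ∫⁻ y, essSup H μ * k (-y + x) ∂μ :=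
        lintegral_mono_ae ((ENNReal.ae_le_essSup H).mono fun y hy => mul_le_mul_left hy _)
    _ = essSup H μ := by
        rw [lintegral_const_mul _ (by fun_prop), lintegral_neg_add_eq_self, hk1, mul_one]

theorem lintegral_rpow_lconvolution_le [SFinite μ] (hk : Measurable k) (hH : AEMeasurable H μ)
    (hk1 : ∫⁻ z, k z ∂μ = 1) {p : ℝ} (hp : 1 ≤ p) :
    ∫⁻ x, (H ⋆ₗ[μ] k) x ^ p ∂μ ≤ ∫⁻ y, H y ^ p ∂μ := by
  have jensen : ∀ x, (H ⋆ₗ[μ] k) x ^ p ≤ ∫⁻ y, k (-y + x) * H y ^ p ∂μ := fun x => by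
    have hkx : Measurable fun y => k (-y + x) := by fun_prop
    have : IsProbabilityMeasure (μ.withDensity fun y => k (-y + x)) :=
      ⟨by rw [withDensity_apply _ MeasurableSet.univ, Measure.restrict_univ,
        lintegral_neg_add_eq_self, hk1]⟩
    have h := rpow_lintegral_le_lintegral_rpow (ν := μ.withDensity fun y => k (-y + x))
      (hH.mono_ac (withDensity_absolutelyContinuous _ _)) hp
    rw [lintegral_withDensity_eq_lintegral_mul₀ hkx.aemeasurable hH,
      lintegral_withDensity_eq_lintegral_mul₀ hkx.aemeasurable (by fun_prop)] at h
    simpa only [lconvolution_def, Pi.mul_apply, mul_comm (H _)] using h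
  calc ∫⁻ x, (H ⋆ₗ[μ] k) x ^ p ∂μ ≤ ∫⁻ x, ∫⁻ y, k (-y + x) * H y ^ p ∂μ ∂μ :=
        lintegral_mono jensen
    _ = ∫⁻ y, ∫⁻ x, k (-y + x) * H y ^ p ∂μ ∂μ := lintegral_lintegral_swap (by fun_prop)
    _ = ∫⁻ y, H y ^ p ∂μ := lintegral_congr fun y => by
        rw [lintegral_mul_const'' _ (by fun_prop), lintegral_add_left_eq_self, hk1, one_mul]

theorem eLpNorm_lconvolution_le [SFinite μ] (hk : Measurable k) (hH : AEMeasurable H μ)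
    (hk1 : ∫⁻ z, k z ∂μ = 1) {p : ℝ≥0∞} (hp : 1 ≤ p) :
    eLpNorm (H ⋆ₗ[μ] k) p μ ≤ eLpNorm H p μ := by
  rcases eq_or_ne p ⊤ with rfl | hp_top
  · simp only [eLpNorm_exponent_top, eLpNormEssSup, enorm_eq_self]
    exact essSup_le_of_ae_le _ (Eventually.of_forall (lconvolution_le_essSup hk hk1))
  · have hp0 : p ≠ 0 := (zero_lt_one.trans_le hp).ne'
    simp only [eLpNorm_eq_lintegral_rpow_enorm_toReal hp0 hp_top, enorm_eq_self]
    exact ENNReal.rpow_le_rpow (lintegral_rpow_lconvolution_le hk hH hk1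
      (ENNReal.toReal_mono hp_top hp)) (by positivity)

end Young

section Mollifier

variable {d : ℕ} {η : Euc d → ℝ} {ε : ℝ}

theorem continuous_mollScaled (hη : IsStdMollifier η) : Continuous (mollScaled η ε) :=
  continuous_const.mul (hη.1.continuous.comp (continuous_const_smul _))

theorem mollScaled_nonneg (hη : IsStdMollifier η) (hε : 0 ≤ ε) (z : Euc d) :
    0 ≤ mollScaled η ε z :=
  mul_nonneg (inv_nonneg.2 (pow_nonneg hε _)) (hη.2.1 _)

theorem mollScaled_eq_zero (hη : IsStdMollifier η) (hε : 0 < ε) {z : Euc d} (hz : ε < ‖z‖) :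
    mollScaled η ε z = 0 := by
  have hz' : ε⁻¹ • z ∉ closedBall (0 : Euc d) 1 := by
    rw [mem_closedBall, dist_zero_right, norm_smul, norm_inv, Real.norm_eq_abs,
      abs_of_pos hε, not_le, ← inv_mul_cancel₀ hε.ne']
    exact mul_lt_mul_of_pos_left hz (inv_pos.2 hε)
  simp [mollScaled, image_eq_zero_of_notMem_tsupport fun h => hz' (hη.2.2.2 h)]

theorem integral_mollScaled (hη : IsStdMollifier η) (hε : 0 < ε) :
    ∫ z, mollScaled η ε z = 1 := by
  have h := Measure.integral_comp_smul (volume : Measure (Euc d)) η ε⁻¹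
  rw [finrank_euclideanSpace_fin] at h
  simp only [mollScaled]
  rw [integral_const_mul, h, hη.2.2.1, smul_eq_mul, mul_one, inv_pow, inv_inv,
    abs_of_pos (pow_pos hε d), inv_mul_cancel₀ (pow_pos hε d).ne']

theorem hasCompactSupport_mollScaled (hη : IsStdMollifier η) (hε : 0 < ε) :
    HasCompactSupport (mollScaled η ε) :=
  HasCompactSupport.intro (isCompact_closedBall 0 ε) fun _ hz =>
    mollScaled_eq_zero hη hε (by simpa using hz)

theorem lintegral_ofReal_mollScaled (hη : IsStdMollifier η) (hε : 0 < ε) :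
    ∫⁻ z, ENNReal.ofReal (mollScaled η ε z) = 1 := by
  rw [← ofReal_integral_eq_lintegral_ofReal
      ((continuous_mollScaled hη).integrable_of_hasCompactSupport
        (hasCompactSupport_mollScaled hη hε))
      (Eventually.of_forall (mollScaled_nonneg hη hε.le)),
    integral_mollScaled hη hε, ENNReal.ofReal_one]

theorem mollScaled_sub_eq_zero_of_notMem (hη : IsStdMollifier η) (hε : 0 < ε) {x y : Euc d}
    (hy : y ∉ closedBall x ε) : mollScaled η ε (x - y) = 0 :=
  mollScaled_eq_zero hη hε
    (by rwa [mem_closedBall, not_le, dist_eq_norm, ← norm_neg, neg_sub] at hy)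

theorem integrable_mollScaled_sub_mul (hη : IsStdMollifier η) (hε : 0 < ε) {x : Euc d}
    {u : Euc d → ℝ} (hu : IntegrableOn u (closedBall x ε)) :
    Integrable fun y => mollScaled η ε (x - y) * u y := by
  obtain ⟨M, hM⟩ := (hasCompactSupport_mollScaled hη hε).exists_bound_of_continuous
    (continuous_mollScaled hη)
  have hcont : Continuous fun y => mollScaled η ε (x - y) :=
    (continuous_mollScaled hη).comp (continuous_const.sub continuous_id)
  refine (integrableOn_iff_integrable_of_support_subset fun y hy => ?_).1
    (hu.bdd_mul hcont.aestronglyMeasurable (Eventually.of_forall fun y => hM (x - y)))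
  by_contra hy'
  simp [mollScaled_sub_eq_zero_of_notMem hη hε hy'] at hy

end Mollifier

section Commutator

variable {d : ℕ} {η : Euc d → ℝ} {ε L : ℝ} {Ω : Set (Euc d)} {f g : Euc d → ℝ}

theorem moll_mul_sub_mul_moll {x : Euc d}
    (hfg : Integrable fun y => mollScaled η ε (x - y) * (f y * g y))
    (hg : Integrable fun y => mollScaled η ε (x - y) * g y) :
    moll η ε (fun y => f y * g y) x - f x * moll η ε g x
      = ∫ y, mollScaled η ε (x - y) * ((f y - f x) * g y) := by
  simp only [moll, smul_eq_mul]
  rw [← integral_const_mul, ← integral_sub hfg (hg.const_mul (f x))]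
  congr 1 with y
  ring

theorem enorm_moll_mul_sub_mul_moll_le (hη : IsStdMollifier η) (hε : 0 < ε) (hL : 0 ≤ L)
    (hLip : ∀ x ∈ Ω, ∀ y ∈ Ω, |f x - f y| ≤ L * ‖x - y‖)
    (hf : AEStronglyMeasurable f volume) {x : Euc d} (hball : closedBall x ε ⊆ Ω)
    (hg : IntegrableOn g (closedBall x ε)) :
    ‖moll η ε (fun y => f y * g y) x - f x * moll η ε g x‖ₑ
      ≤ ENNReal.ofReal (L * ε) *
        ((Ω.indicator fun y => ‖g y‖ₑ) ⋆ₗ fun z => ENNReal.ofReal (mollScaled η ε z)) x := by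
  have hosc : ∀ y ∈ closedBall x ε, |f y - f x| ≤ L * ε := fun y hy =>
    (hLip y (hball hy) x (hball (mem_closedBall_self hε.le))).trans
      (mul_le_mul_of_nonneg_left (by rwa [← dist_eq_norm]) hL)
  have hfg : IntegrableOn (fun y => f y * g y) (closedBall x ε) := by
    refine hg.bdd_mul (c := |f x| + L * ε) hf.restrict ?_
    refine (ae_restrict_iff' measurableSet_closedBall).2 (Eventually.of_forall fun y hy => ?_)
    rw [Real.norm_eq_abs]
    linarith [abs_sub_abs_le_abs_sub (f y) (f x), hosc y hy]
  rw [moll_mul_sub_mul_moll (integrable_mollScaled_sub_mul hη hε hfg)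
    (integrable_mollScaled_sub_mul hη hε hg), lconvolution_def,
    ← lintegral_const_mul' _ _ ENNReal.ofReal_ne_top]
  refine (enorm_integral_le_lintegral_enorm _).trans (lintegral_mono fun y => ?_)
  by_cases hy : y ∈ closedBall x ε
  · rw [indicator_of_mem (hball hy), enorm_mul, enorm_mul, neg_add_eq_sub,
      Real.enorm_eq_ofReal (mollScaled_nonneg hη hε.le _), Real.enorm_eq_ofReal_abs]
    calc ENNReal.ofReal (mollScaled η ε (x - y)) * (ENNReal.ofReal |f y - f x| * ‖g y‖ₑ)
        ≤ ENNReal.ofReal (mollScaled η ε (x - y)) * (ENNReal.ofReal (L * ε) * ‖g y‖ₑ) := by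
          gcongr
          exact hosc y hy
      _ = _ := by ring
  · simp [mollScaled_sub_eq_zero_of_notMem hη hε hy]

theorem eLpNorm_moll_mul_sub_mul_moll_le (hη : IsStdMollifier η) (hε : 0 < ε)
    (hΩ : MeasurableSet Ω) {q : ℝ≥0∞} (hq : 1 ≤ q) (hL : 0 ≤ L)
    (hLip : ∀ x ∈ Ω, ∀ y ∈ Ω, |f x - f y| ≤ L * ‖x - y‖)
    (hf : AEStronglyMeasurable f volume) (hg : AEStronglyMeasurable g volume)
    (hgq : eLpNorm g q (volume.restrict Ω) < ⊤) :
    eLpNorm (fun x => moll η ε (fun y => f y * g y) x - f x * moll η ε g x) q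
        (volume.restrict {x ∈ Ω | ε < infDist x Ωᶜ})
      ≤ ENNReal.ofReal (L * ε) * eLpNorm g q (volume.restrict Ω) := by
  set S := {x ∈ Ω | ε < infDist x Ωᶜ}
  set k : Euc d → ℝ≥0∞ := fun z => ENNReal.ofReal (mollScaled η ε z)
  set H : Euc d → ℝ≥0∞ := Ω.indicator fun y => ‖g y‖ₑ
  have hS : MeasurableSet S :=
    hΩ.inter (measurableSet_lt measurable_const (continuous_infDist_pt _).measurable)
  have hball : ∀ x ∈ S, closedBall x ε ⊆ Ω := fun x hx =>
    (closedBall_subset_ball hx.2).trans ball_infDist_compl_subset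
  have hgloc : ∀ x ∈ S, IntegrableOn g (closedBall x ε) := by
    intro x hx
    have : IsFiniteMeasure (volume.restrict (closedBall x ε)) :=
      isFiniteMeasure_restrict.2 measure_closedBall_lt_top.ne
    exact MemLp.integrable hq ⟨hg.restrict, (eLpNorm_mono_measure _
      (Measure.restrict_mono (hball x hx) le_rfl)).trans_lt hgq⟩
  calc _ ≤ (L * ε).toNNReal • eLpNorm (H ⋆ₗ k) q (volume.restrict S) :=
        eLpNorm_le_nnreal_smul_eLpNorm_of_ae_le_mul' ((ae_restrict_iff' hS).2
          (Eventually.of_forall fun x hx => enorm_moll_mul_sub_mul_moll_le hη hε hL hLip hf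
            (hball x hx) (hgloc x hx))) q
    _ ≤ ENNReal.ofReal (L * ε) * eLpNorm (H ⋆ₗ k) q volume :=
        mul_le_mul_right (eLpNorm_mono_measure _ Measure.restrict_le_self) _
    _ ≤ ENNReal.ofReal (L * ε) * eLpNorm H q volume := by
        gcongr
        exact eLpNorm_lconvolution_le (continuous_mollScaled hη).measurable.ennreal_ofReal
          (hg.aemeasurable.enorm.indicator hΩ) (lintegral_ofReal_mollScaled hη hε) hq
    _ = ENNReal.ofReal (L * ε) * eLpNorm g q (volume.restrict Ω) := by
        rw [eLpNorm_indicator_eq_eLpNorm_restrict hΩ, eLpNorm_enorm]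

end Commutator

theorem lipschitz_commutator_general {d : ℕ}
    (Ω : Set (Euc d)) (hΩo : IsOpen Ω)
    (q : ℝ≥0∞) (hq : 1 ≤ q)
    (η : Euc d → ℝ) (hη : IsStdMollifier η) :
    ∃ C : ℝ, 0 < C ∧
      ∀ (L : ℝ) (f g : Euc d → ℝ), 0 ≤ L →
        (∀ x ∈ Ω, ∀ y ∈ Ω, |f x - f y| ≤ L * ‖x - y‖) →
        AEStronglyMeasurable f volume → AEStronglyMeasurable g volume →
        eLpNorm g q (volume.restrict Ω) < ⊤ →
        (∀ ε : ℝ, 0 < ε →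
          eLpNorm (fun x => moll η ε (fun y => f y * g y) x - f x * moll η ε g x) q
              (volume.restrict {x ∈ Ω | ε < Metric.infDist x Ωᶜ})
            ≤ ENNReal.ofReal (C * ε * L) * eLpNorm g q (volume.restrict Ω)) ∧
        (q ≠ ⊤ →
          Tendsto (fun ε : ℝ =>
              eLpNorm (fun x => moll η ε (fun y => f y * g y) x - f x * moll η ε g x) q
                (volume.restrict {x ∈ Ω | ε < Metric.infDist x Ωᶜ}))
            (𝓝[>] (0:ℝ)) (𝓝 0)) := by
  refine ⟨1, one_pos, fun L f g hL hLip hf hg hgq => ?_⟩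
  have bound : ∀ ε : ℝ, 0 < ε →
      eLpNorm (fun x => moll η ε (fun y => f y * g y) x - f x * moll η ε g x) q
          (volume.restrict {x ∈ Ω | ε < Metric.infDist x Ωᶜ})
        ≤ ENNReal.ofReal (1 * ε * L) * eLpNorm g q (volume.restrict Ω) := fun ε hε => by
    rw [one_mul, mul_comm ε]
    exact eLpNorm_moll_mul_sub_mul_moll_le hη hε hΩo.measurableSet hq hL hLip hf hg hgq
  refine ⟨bound, fun _ => ?_⟩
  have hlin : Tendsto (fun ε : ℝ => 1 * ε * L) (𝓝[>] 0) (𝓝 0) := by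
    have h := ((continuous_id.const_mul 1).mul_const L).tendsto (0 : ℝ)
    simpa using h.mono_left nhdsWithin_le_nhds
  have hbound : Tendsto (fun ε : ℝ => ENNReal.ofReal (1 * ε * L) * eLpNorm g q (volume.restrict Ω))
      (𝓝[>] 0) (𝓝 0) := by
    simpa using ENNReal.Tendsto.mul_const (ENNReal.tendsto_ofReal hlin) (Or.inr hgq.ne)
  exact tendsto_of_tendsto_of_tendsto_of_le_of_le' tendsto_const_nhds hbound
    (Eventually.of_forall fun _ => zero_le) (eventually_mem_nhdsWithin.mono bound)

/-- **Lipschitz commutator estimate** (Remark 2.3, the case `α = 1`): if `f` is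
Lipschitz on `Ω` with constant `L` and `g ∈ L^q(Ω)`, then
`‖(fg)^ε − f g^ε‖_{L^q} ≤ C ε L ‖g‖_{L^q(Ω)}` with `C` independent of `ε`, `f`
and `g`; in particular, when `q < ∞`, the commutator tends to `0` in `L^q` as
`ε → 0`. -/
theorem lipschitz_commutator {d : ℕ} (hd : 0 < d)
    (Ω : Set (Euc d)) (hΩo : IsOpen Ω) (hΩb : Bornology.IsBounded Ω)
    (q : ℝ≥0∞) (hq : 1 ≤ q)
    (η : Euc d → ℝ) (hη : IsStdMollifier η) :
    ∃ C : ℝ, 0 < C ∧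
      ∀ (L : ℝ) (f g : Euc d → ℝ), 0 ≤ L →
        (∀ x ∈ Ω, ∀ y ∈ Ω, |f x - f y| ≤ L * ‖x - y‖) →
        AEStronglyMeasurable f volume → AEStronglyMeasurable g volume →
        eLpNorm g q (volume.restrict Ω) < ⊤ →
        (∀ ε : ℝ, 0 < ε →
          eLpNorm (fun x => moll η ε (fun y => f y * g y) x - f x * moll η ε g x) q
              (volume.restrict {x ∈ Ω | ε < Metric.infDist x Ωᶜ})
            ≤ ENNReal.ofReal (C * ε * L) * eLpNorm g q (volume.restrict Ω)) ∧
        (q ≠ ⊤ →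
          Tendsto (fun ε : ℝ =>
              eLpNorm (fun x => moll η ε (fun y => f y * g y) x - f x * moll η ε g x) q
                (volume.restrict {x ∈ Ω | ε < Metric.infDist x Ωᶜ}))
            (𝓝[>] (0:ℝ)) (𝓝 0)) :=
  lipschitz_commutator_general Ω hΩo q hq η hη
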